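/- Fix γ > 0 and define g₀(r) = (π/(2¹¹ γ³))^{1/2}·|r|^{−5/2} for r ≠ 0. Then for each sign, g_{B,±} converges pointwise to g₀ as B → 0⁺: for every r ≠ 0, lim_{B→0⁺} g_{B,±}(r) = g₀(r). Moreover g₀ is the density of a Lévy measure on ℝ \ {0}, i.e. ∫_{ℝ \ {0}} min(1, r²)·g₀(r) dr < ∞. -/

import Mathlib

open Filter Topology MeasureTheory Set Real

/-!
With `ψ_{B,ε}(t) = (2√(t² + B²/4) + εB) t`, an odd increasing homeomorphism of `ℝ` when `|ε| ≤ 1`,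
one has `x_{B,ε}(r) = ψ⁻¹(π/(γr))`. The inverse function rule and the fundamental theorem of
calculus give, for either sign of `r`, `g_{B,ε}(r) = φ(x)/(4γ r² ψ'(x))` with `x = x_{B,ε}(r)` and
`φ` the integrand of `h`. As `B → 0⁺` the equation `ψ(x) = π/(γr)` forces `x² → π/(2γ|r|)`, while
`φ(x) ~ x²/2` and `ψ'(x) ~ 4|x|`, so `g_{B,ε}(r) → √(π/(2γ|r|))/(32γr²)`. The Lévy condition holds
because `min(1, r²)|r|^(-5/2)` is `|r|^(-1/2)` near `0` and `|r|^(-5/2)` near infinity.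
-/

noncomputable section

def psi (B ε t : ℝ) : ℝ := (2 * √(t ^ 2 + B ^ 2 / 4) + ε * B) * t

def psiDeriv (B ε t : ℝ) : ℝ :=
  2 * √(t ^ 2 + B ^ 2 / 4) + 2 * t ^ 2 / √(t ^ 2 + B ^ 2 / 4) + ε * B

def phi (B ε t : ℝ) : ℝ := (1 / 2 + ε * B / (4 * √(t ^ 2 + B ^ 2 / 4))) * t ^ 2

end

theorem half_le_sqrt_sq_add_sq_div_four (B t : ℝ) : B / 2 ≤ √(t ^ 2 + B ^ 2 / 4) :=
  Real.le_sqrt_of_sq_le (by nlinarith [sq_nonneg t])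

theorem abs_le_sqrt_sq_add_sq_div_four (B t : ℝ) : |t| ≤ √(t ^ 2 + B ^ 2 / 4) :=
  Real.abs_le_sqrt (le_add_of_nonneg_right (by positivity))

theorem sqrt_sq_add_sq_div_four_le_abs_add {B : ℝ} (hB : 0 ≤ B) (t : ℝ) :
    √(t ^ 2 + B ^ 2 / 4) ≤ |t| + B / 2 :=
  Real.sqrt_le_iff.2 ⟨by positivity, by nlinarith [sq_abs t, abs_nonneg t]⟩

theorem sqrt_sq_add_sq_div_four_pos {B : ℝ} (hB : 0 < B) (t : ℝ) : 0 < √(t ^ 2 + B ^ 2 / 4) := by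
  positivity

theorem psi_neg (B ε t : ℝ) : psi B ε (-t) = -psi B ε t := by
  simp only [psi, neg_sq, mul_neg]

theorem continuous_psi (B ε : ℝ) : Continuous (psi B ε) := by
  unfold psi; fun_prop

section

variable {B ε : ℝ}

theorem hasDerivAt_psi (hB : 0 < B) (t : ℝ) : HasDerivAt (psi B ε) (psiDeriv B ε t) t := by
  have hs : t ^ 2 + B ^ 2 / 4 ≠ 0 := by positivity
  have h := ((((hasDerivAt_pow 2 t).add_const (B ^ 2 / 4)).sqrt hs).const_mul 2
    |>.add_const (ε * B)).mul (hasDerivAt_id t)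
  refine h.congr_deriv ?_
  have := sqrt_sq_add_sq_div_four_pos hB t
  simp only [psiDeriv, id]
  field_simp
  ring

theorem psiDeriv_pos (hB : 0 < B) (hε : |ε| ≤ 1) {t : ℝ} (ht : t ≠ 0) : 0 < psiDeriv B ε t := by
  have h₁ := half_le_sqrt_sq_add_sq_div_four B t
  have h₂ : 0 < 2 * t ^ 2 / √(t ^ 2 + B ^ 2 / 4) := by
    have := sqrt_sq_add_sq_div_four_pos hB t; positivity
  have h₃ : -B ≤ ε * B := by nlinarith [(abs_le.1 hε).1]
  unfold psiDeriv; linarith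

theorem strictMono_psi (hB : 0 < B) (hε : |ε| ≤ 1) : StrictMono (psi B ε) := by
  have hderiv (t : ℝ) (ht : t ≠ 0) : 0 < deriv (psi B ε) t := by
    rw [(hasDerivAt_psi hB t).deriv]; exact psiDeriv_pos hB hε ht
  refine StrictMonoOn.Iic_union_Ici (a := 0) ?_ ?_
  · refine strictMonoOn_of_deriv_pos (convex_Iic 0) (continuous_psi B ε).continuousOn ?_
    rw [interior_Iic]; exact fun t ht => hderiv t ht.ne
  · refine strictMonoOn_of_deriv_pos (convex_Ici 0) (continuous_psi B ε).continuousOn ?_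
    rw [interior_Ici]; exact fun t ht => hderiv t ht.ne'

theorem tendsto_psi_atTop (hB : 0 < B) (hε : |ε| ≤ 1) : Tendsto (psi B ε) atTop atTop := by
  have hlin : Tendsto (fun t : ℝ => 2 * t - B) atTop atTop :=
    tendsto_atTop_add_const_right _ _ (tendsto_id.const_mul_atTop two_pos)
  refine tendsto_atTop_mono' _ ?_ (hlin.atTop_mul_atTop₀ tendsto_id)
  filter_upwards [eventually_ge_atTop 0] with t ht
  have h₁ := abs_le_sqrt_sq_add_sq_div_four B t
  have h₂ : -B ≤ ε * B := by nlinarith [(abs_le.1 hε).1]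
  rw [abs_of_nonneg ht] at h₁
  exact mul_le_mul_of_nonneg_right (by linarith) ht

theorem tendsto_psi_atBot (hB : 0 < B) (hε : |ε| ≤ 1) : Tendsto (psi B ε) atBot atBot := by
  have h := tendsto_neg_atTop_atBot.comp ((tendsto_psi_atTop hB hε).comp tendsto_neg_atBot_atTop)
  refine h.congr fun t => ?_
  simp [psi_neg]

noncomputable def psiOrderIso (hB : 0 < B) (hε : |ε| ≤ 1) : ℝ ≃o ℝ :=
  (strictMono_psi hB hε).orderIsoOfSurjective _
    ((continuous_psi B ε).surjective (tendsto_psi_atTop hB hε) (tendsto_psi_atBot hB hε))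

theorem hasDerivAt_of_psi_eq_div (hB : 0 < B) (hε : |ε| ≤ 1) {c : ℝ} (hc : c ≠ 0) {x : ℝ → ℝ}
    (hx : ∀ s ≠ 0, psi B ε (x s) = c / s) {r : ℝ} (hr : r ≠ 0) :
    HasDerivAt x (-c / (r ^ 2 * psiDeriv B ε (x r))) r := by
  set e := psiOrderIso hB hε
  have hxe (s : ℝ) (hs : s ≠ 0) : x s = e.symm (c / s) := e.eq_symm_apply.2 (hx s hs)
  have hxr : x r ≠ 0 := by
    intro h0
    have := hx r hr
    rw [h0, psi, mul_zero] at this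
    exact div_ne_zero hc hr this.symm
  have hψ' := psiDeriv_pos hB hε hxr
  have hinv : HasDerivAt e.symm (psiDeriv B ε (x r))⁻¹ (c / r) :=
    HasDerivAt.of_local_left_inverse e.symm.continuous.continuousAt
      (hxe r hr ▸ hasDerivAt_psi hB (x r)) hψ'.ne' (Eventually.of_forall e.apply_symm_apply)
  have hdiv : HasDerivAt (fun s => c / s) (c * -(r ^ 2)⁻¹) r := by
    simpa only [div_eq_mul_inv] using (hasDerivAt_inv hr).const_mul c
  have hxe_nhds : x =ᶠ[𝓝 r] fun s => e.symm (c / s) :=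
    eventually_ne_nhds hr |>.mono hxe
  refine ((hinv.comp r hdiv).congr_of_eventuallyEq hxe_nhds).congr_deriv ?_
  field_simp

theorem hasDerivAt_integral_phi (hB : 0 < B) (u : ℝ) :
    HasDerivAt (fun v => ∫ t in (0 : ℝ)..v, phi B ε t) (phi B ε u) u := by
  have : Continuous (phi B ε) := by
    unfold phi
    refine Continuous.mul ?_ (continuous_pow 2)
    exact continuous_const.add (continuous_const.div (by fun_prop)
      fun t => (mul_pos four_pos (sqrt_sq_add_sq_div_four_pos hB t)).ne')
  exact (this.integral_hasStrictDerivAt 0 u).hasDerivAt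

theorem ite_neg_deriv_eq_phi_div_psiDeriv (hB : 0 < B) (hε : |ε| ≤ 1) {c k : ℝ} (hc : c ≠ 0)
    {x h : ℝ → ℝ} (hx : ∀ s ≠ 0, psi B ε (x s) = c / s)
    (hh : ∀ s ≠ 0, h s = k * if 0 < s then ∫ t in (0 : ℝ)..x s, phi B ε t
      else ∫ t in x s..0, phi B ε t) {r : ℝ} (hr : r ≠ 0) :
    (if 0 < r then -deriv h r else deriv h r) =
      k * c * phi B ε (x r) / (r ^ 2 * psiDeriv B ε (x r)) := by
  have hF := (hasDerivAt_integral_phi (ε := ε) hB (x r)).comp r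
    (hasDerivAt_of_psi_eq_div hB hε hc hx hr)
  rcases hr.lt_or_gt with hneg | hpos
  · have heq : h =ᶠ[𝓝 r] fun s => -(k * ∫ t in (0 : ℝ)..x s, phi B ε t) := by
      filter_upwards [Iio_mem_nhds hneg] with s (hs : s < 0)
      rw [hh s hs.ne, if_neg hs.not_gt, intervalIntegral.integral_symm, mul_neg]
    rw [if_neg hneg.not_gt, ((hF.const_mul k).neg.congr_of_eventuallyEq heq).deriv]
    ring
  · have heq : h =ᶠ[𝓝 r] fun s => k * ∫ t in (0 : ℝ)..x s, phi B ε t := by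
      filter_upwards [Ioi_mem_nhds hpos] with s (hs : 0 < s)
      rw [hh s hs.ne', if_pos hs]
    rw [if_pos hpos, ((hF.const_mul k).congr_of_eventuallyEq heq).deriv]
    ring

theorem abs_sq_sub_le_of_psi_eq (hB : 0 < B) (hB₁ : B ≤ 1) (hε : |ε| ≤ 1) {X c : ℝ}
    (h : psi B ε X = c) : |X ^ 2 - |c| / 2| ≤ B * (1 + |c|) := by
  have h₁ := abs_le_sqrt_sq_add_sq_div_four B X
  have h₂ := sqrt_sq_add_sq_div_four_le_abs_add hB.le X
  have h₃ := half_le_sqrt_sq_add_sq_div_four B X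
  have hεB : |ε * B| ≤ B := by
    rw [abs_mul, abs_of_pos hB]; exact mul_le_of_le_one_left hB.le hε
  obtain ⟨hεB₁, hεB₂⟩ := abs_le.1 hεB
  have hc : |c| = (2 * √(X ^ 2 + B ^ 2 / 4) + ε * B) * |X| := by
    rw [← h, psi, abs_mul, abs_of_nonneg (by linarith)]
  have hX : |X| ^ 2 = X ^ 2 := sq_abs X
  have hX₀ := abs_nonneg X
  have hlow : 2 * X ^ 2 - B * |X| ≤ |c| := by
    nlinarith [mul_le_mul_of_nonneg_right h₁ hX₀, mul_le_mul_of_nonneg_right hεB₁ hX₀]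
  have hhigh : |c| ≤ 2 * X ^ 2 + 2 * B * |X| := by
    nlinarith [mul_le_mul_of_nonneg_right h₂ hX₀, mul_le_mul_of_nonneg_right hεB₂ hX₀]
  have hXc : |X| ≤ 1 + |c| := by
    nlinarith [mul_le_mul_of_nonneg_right hB₁ hX₀, abs_nonneg c]
  rw [abs_le]
  constructor <;> nlinarith

theorem tendsto_sq_of_psi_eq (hε : |ε| ≤ 1) {X : ℝ → ℝ} {c : ℝ}
    (hX : ∀ B, 0 < B → psi B ε (X B) = c) :
    Tendsto (fun B => X B ^ 2) (𝓝[>] 0) (𝓝 (|c| / 2)) := by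
  rw [← tendsto_sub_nhds_zero_iff]
  have hbound : Tendsto (fun B : ℝ => B * (1 + |c|)) (𝓝[>] 0) (𝓝 0) := by
    simpa using (tendsto_id.mul_const (1 + |c|)).mono_left (nhdsWithin_le_nhds (a := (0 : ℝ)))
  refine squeeze_zero_norm' ?_ hbound
  filter_upwards [Ioo_mem_nhdsGT one_pos] with B ⟨hB₀, hB₁⟩
  exact abs_sq_sub_le_of_psi_eq hB₀ hB₁.le hε (hX B hB₀)

end

theorem tendsto_phi_div_psiDeriv (ε : ℝ) {X : ℝ → ℝ} {Q : ℝ} (hQ : 0 < Q)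
    (hX : Tendsto (fun B => X B ^ 2) (𝓝[>] 0) (𝓝 Q)) :
    Tendsto (fun B => phi B ε (X B) / psiDeriv B ε (X B)) (𝓝[>] 0) (𝓝 (√Q / 8)) := by
  have hB : Tendsto (fun B : ℝ => B) (𝓝[>] 0) (𝓝 0) := nhdsWithin_le_nhds
  have hs : Tendsto (fun B => √(X B ^ 2 + B ^ 2 / 4)) (𝓝[>] 0) (𝓝 √Q) := by
    simpa using (hX.add ((hB.pow 2).div_const 4)).sqrt
  have hQ' : 0 < √Q := Real.sqrt_pos.2 hQ
  have hphi : Tendsto (fun B => phi B ε (X B)) (𝓝[>] 0) (𝓝 ((1 / 2 + ε * 0 / (4 * √Q)) * Q)) :=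
    (((hB.const_mul ε).div (hs.const_mul 4) (by positivity)).const_add (1 / 2)).mul hX
  have hpsi : Tendsto (fun B => psiDeriv B ε (X B)) (𝓝[>] 0) (𝓝 (2 * √Q + 2 * Q / √Q + ε * 0)) :=
    ((hs.const_mul 2).add ((hX.const_mul 2).div hs hQ'.ne')).add (hB.const_mul ε)
  rw [mul_zero, zero_div, add_zero] at hphi
  rw [mul_zero, add_zero] at hpsi
  have hlim : √Q / 8 = 1 / 2 * Q / (2 * √Q + 2 * Q / √Q) := by
    field_simp
    linear_combination 4 * Real.sq_sqrt hQ.le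
  rw [hlim]
  exact hphi.div hpsi (by positivity)

theorem sqrt_mul_abs_rpow_neg_five_halves {γ r : ℝ} (hγ : 0 < γ) (hr : r ≠ 0) :
    √(π / (2 ^ 11 * γ ^ 3)) * |r| ^ (-(5 / 2 : ℝ)) = √(π / (2 * γ * |r|)) / (32 * γ * r ^ 2) := by
  have hr' : 0 < |r| := abs_pos.2 hr
  rw [← sq_eq_sq₀ (by positivity) (by positivity), mul_pow, div_pow, sq_sqrt (by positivity),
    sq_sqrt (by positivity), ← rpow_mul_natCast hr'.le]
  norm_num
  rw [← sq_abs r]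
  field_simp
  ring

theorem integrableOn_Ioi_min_one_sq_mul_rpow_neg {p : ℝ} (hp₁ : 1 < p) (hp₃ : p < 3) :
    IntegrableOn (fun r : ℝ => min 1 (r ^ 2) * |r| ^ (-p)) (Ioi 0) := by
  rw [← Ioc_union_Ioi_eq_Ioi zero_le_one]
  refine IntegrableOn.union ?_ ?_
  · have h : IntegrableOn (fun r : ℝ => r ^ (2 - p)) (Ioc 0 1) :=
      (intervalIntegrable_iff_integrableOn_Ioc_of_le zero_le_one).1
        (intervalIntegral.intervalIntegrable_rpow' (by linarith))
    refine h.congr_fun (fun r ⟨hr₀, hr₁⟩ => ?_) measurableSet_Ioc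
    rw [min_eq_right (by nlinarith), abs_of_pos hr₀, ← rpow_two, ← rpow_add hr₀, sub_eq_add_neg]
  · refine ((integrableOn_Ioi_rpow_iff (s := -p) one_pos).2 (by linarith)).congr_fun
      (fun r (hr : 1 < r) => ?_) measurableSet_Ioi
    rw [min_eq_left (by nlinarith), abs_of_pos (by linarith), one_mul]

theorem integrableOn_compl_zero_min_one_sq_mul_rpow_neg {p : ℝ} (hp₁ : 1 < p) (hp₃ : p < 3) :
    IntegrableOn (fun r : ℝ => min 1 (r ^ 2) * |r| ^ (-p)) {0}ᶜ := by
  have h := integrableOn_Ioi_min_one_sq_mul_rpow_neg hp₁ hp₃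
  rw [← Iio_union_Ioi]
  refine IntegrableOn.union ?_ h
  rw [← neg_zero] at h
  simpa only [neg_sq, abs_neg] using h.comp_neg_Iio

theorem stmt_7 (γ : ℝ) (hγ : 0 < γ)
    (x h g : ℝ → ℝ → ℝ → ℝ)
    (hx : ∀ B : ℝ, 0 < B → ∀ ε : ℝ, (ε = 1 ∨ ε = -1) → ∀ r : ℝ, r ≠ 0 →
      (2 * Real.sqrt (x B ε r ^ 2 + B ^ 2 / 4) + ε * B) * x B ε r = Real.pi / (γ * r))
    (hh : ∀ B : ℝ, 0 < B → ∀ ε : ℝ, (ε = 1 ∨ ε = -1) → ∀ r : ℝ, r ≠ 0 →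
      h B ε r = (1 / (4 * Real.pi)) *
        (if 0 < r then
          ∫ t in (0 : ℝ)..(x B ε r),
            (1 / 2 + ε * B / (4 * Real.sqrt (t ^ 2 + B ^ 2 / 4))) * t ^ 2
         else
          ∫ t in (x B ε r)..(0 : ℝ),
            (1 / 2 + ε * B / (4 * Real.sqrt (t ^ 2 + B ^ 2 / 4))) * t ^ 2))
    (hg : ∀ B : ℝ, 0 < B → ∀ ε : ℝ, (ε = 1 ∨ ε = -1) → ∀ r : ℝ, r ≠ 0 →
      g B ε r = if 0 < r then -(deriv (h B ε) r) else deriv (h B ε) r) :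
    (∀ ε : ℝ, (ε = 1 ∨ ε = -1) → ∀ r : ℝ, r ≠ 0 →
      Tendsto (fun B => g B ε r) (𝓝[>] 0)
        (𝓝 (Real.sqrt (Real.pi / (2 ^ 11 * γ ^ 3)) * |r| ^ (-(5 / 2 : ℝ))))) ∧
    ∫⁻ r in ({0}ᶜ : Set ℝ),
      ENNReal.ofReal (min 1 (r ^ 2) *
        (Real.sqrt (Real.pi / (2 ^ 11 * γ ^ 3)) * |r| ^ (-(5 / 2 : ℝ)))) < ⊤ := by
  refine ⟨fun ε hε r hr => ?_, ?_⟩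
  · have hε' : |ε| ≤ 1 := by rcases hε with rfl | rfl <;> norm_num
    have hxB (B : ℝ) (hB : 0 < B) (s : ℝ) (hs : s ≠ 0) : psi B ε (x B ε s) = π / γ / s :=
      (hx B hB ε hε s hs).trans (div_div _ _ _).symm
    have hQ : 0 < |π / γ / r| / 2 := by positivity
    have hlim := ((tendsto_phi_div_psiDeriv ε hQ (tendsto_sq_of_psi_eq hε' fun B hB =>
      hxB B hB r hr)).const_mul (1 / (4 * π) * (π / γ))).div_const (r ^ 2)
    have hval : 1 / (4 * π) * (π / γ) * (√(|π / γ / r| / 2) / 8) / r ^ 2 =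
        √(π / (2 ^ 11 * γ ^ 3)) * |r| ^ (-(5 / 2 : ℝ)) := by
      rw [sqrt_mul_abs_rpow_neg_five_halves hγ hr, abs_div, abs_div, abs_of_pos pi_pos,
        abs_of_pos hγ, div_div, div_div]
      field_simp
      ring
    rw [← hval]
    refine hlim.congr' ?_
    filter_upwards [self_mem_nhdsWithin] with B (hB : 0 < B)
    rw [hg B hB ε hε r hr, ite_neg_deriv_eq_phi_div_psiDeriv hB hε' (by positivity) (hxB B hB)
      (hh B hB ε hε) hr]
    ring
  · have hint := (integrableOn_compl_zero_min_one_sq_mul_rpow_neg (p := 5 / 2) (by norm_num)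
      (by norm_num)).const_mul √(π / (2 ^ 11 * γ ^ 3))
    convert IntegrableOn.setLIntegral_lt_top hint using 4
    ring
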